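/- arXiv:2110.06101 — 9 statements merged into one kernel-verified Lean document; each statement's English description precedes it below -/
import Mathlib

section
/- Let (X_n)_{n≥1} be a sequence of nonempty metric spaces, and for each n ≥ 1 let R_n be a correspondence between X_n and X_{n+1} with dis R_n < 1/2^n. Then there exists a nonempty metric space X such that for every n ≥ 1 there is a correspondence R'_n between X and X_n with dis R'_n ≤ 1/2^{n-1}. (In particular, the sequence X_n converges to X in the Gromov–Hausdorff distance, which proves that the Gromov–Hausdorff class is complete.) -/
open ENNReal

/-- A correspondence between `X` and `Y`: a relation whose projections to both
factors are surjective. -/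
def IsCorrespondence {X Y : Type*} (R : Set (X × Y)) : Prop :=
  (∀ x : X, ∃ y : Y, (x, y) ∈ R) ∧ (∀ y : Y, ∃ x : X, (x, y) ∈ R)

/-- The distortion of a relation `R ⊆ X × Y`:
`sup { |d_X(x,x') − d_Y(y,y')| : (x,y) ∈ R, (x',y') ∈ R }`, valued in `[0,∞]`. -/
noncomputable def dis {X Y : Type*} [MetricSpace X] [MetricSpace Y]
    (R : Set (X × Y)) : ℝ≥0∞ :=
  ⨆ p ∈ R, ⨆ q ∈ R, ENNReal.ofReal |dist p.1 q.1 - dist p.2 q.2|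

/-- The `l`-scaled distortion of a relation `R ⊆ X × Y`:
`sup { |d_X(x,x') − l·d_Y(y,y')| : (x,y) ∈ R, (x',y') ∈ R }`, valued in `[0,∞]`.
Its finiteness is equivalent to finiteness of the Gromov–Hausdorff distance
between `X` and the rescaled space `l·Y`. -/
noncomputable def disScaled {X Y : Type*} [MetricSpace X] [MetricSpace Y]
    (l : ℝ) (R : Set (X × Y)) : ℝ≥0∞ :=
  ⨆ p ∈ R, ⨆ q ∈ R, ENNReal.ofReal |dist p.1 q.1 - l * dist p.2 q.2|

universe u

/-!
A point of the limit space is a thread: a sequence `(x_k)` with `(x_k, x_{k+1}) ∈ R_k`. Along two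
threads the distances `d(x_k, y_k)` move by less than `2^{-(k+1)}` at step `k`, so they converge,
and the limit differs from `d(x_n, y_n)` by at most `2^{-n}`. These limits form a pseudometric on
threads, whose metric quotient is the limit space. As every `R_k` is a correspondence, each point
of `X_n` lies on a thread, so "a thread and its `n`-th term" is a correspondence between the limit
space and `X_n` of distortion at most `2^{-n}`.
-/

open Filter Topology

section Distortion

variable {Y Z : Type*} [MetricSpace Y] [MetricSpace Z] {S : Set (Y × Z)}

lemma abs_dist_sub_dist_lt_of_dis_lt {r : ℝ} (h : dis S < ENNReal.ofReal r) {p q : Y × Z}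
    (hp : p ∈ S) (hq : q ∈ S) : |dist p.1 q.1 - dist p.2 q.2| < r := by
  have hpq : ENNReal.ofReal |dist p.1 q.1 - dist p.2 q.2| ≤ dis S :=
    le_iSup₂_of_le p hp (le_iSup₂_of_le q hq le_rfl)
  exact (ENNReal.ofReal_lt_ofReal_iff'.mp (hpq.trans_lt h)).1

lemma dis_le_ofReal {r : ℝ} (h : ∀ p ∈ S, ∀ q ∈ S, |dist p.1 q.1 - dist p.2 q.2| ≤ r) :
    dis S ≤ ENNReal.ofReal r :=
  iSup₂_le fun p hp => iSup₂_le fun q hq => ENNReal.ofReal_le_ofReal (h p hp q hq)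

end Distortion

section Threads

variable {X : ℕ → Type u} (R : ∀ n, Set (X n × X (n + 1)))

def Thread : Type u := {s : ∀ k, X k // ∀ k, (s k, s (k + 1)) ∈ R k}

variable {R}

lemma exists_chain_ending_at [∀ n, Nonempty (X n)] (hR : ∀ n (y : X (n + 1)), ∃ x, (x, y) ∈ R n)
    (n : ℕ) (x : X n) : ∃ t : ∀ k, X k, t n = x ∧ ∀ k < n, (t k, t (k + 1)) ∈ R k := by
  induction n with
  | zero => exact ⟨Function.update (fun k => Classical.arbitrary (X k)) 0 x, by simp, by omega⟩
  | succ n ih =>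
    obtain ⟨x', hx'⟩ := hR n x
    obtain ⟨t, htn, ht⟩ := ih x'
    refine ⟨Function.update t (n + 1) x, by simp, fun k hk => ?_⟩
    rcases Nat.lt_succ_iff_lt_or_eq.mp hk with hk | rfl
    · rw [Function.update_of_ne (by omega), Function.update_of_ne (by omega)]
      exact ht k hk
    · rw [Function.update_of_ne (by omega), Function.update_self, htn]
      exact hx'

lemma exists_thread_extending (hR : ∀ n (x : X n), ∃ y, (x, y) ∈ R n) {n : ℕ} {t : ∀ k, X k}
    (ht : ∀ k < n, (t k, t (k + 1)) ∈ R k) : ∃ s : Thread R, ∀ k ≤ n, s.1 k = t k := by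
  choose next hnext using hR
  let s : ∀ k, X k := fun k =>
    Nat.rec (motive := X) (t 0) (fun k sk => if k + 1 ≤ n then t (k + 1) else next k sk) k
  have hs_le : ∀ k ≤ n, s k = t k := by
    rintro (_ | k) hk
    · rfl
    · exact if_pos hk
  refine ⟨⟨s, fun k => ?_⟩, hs_le⟩
  rcases Nat.lt_or_ge k n with hk | hk
  · rw [hs_le k hk.le, hs_le (k + 1) hk]
    exact ht k hk
  · have hs_succ : s (k + 1) = next k (s k) := if_neg (by omega)
    rw [hs_succ]
    exact hnext k (s k)

lemma exists_thread_through [∀ n, Nonempty (X n)] (hR : ∀ n, IsCorrespondence (R n)) (n : ℕ)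
    (x : X n) : ∃ s : Thread R, s.1 n = x := by
  obtain ⟨t, htn, ht⟩ := exists_chain_ending_at (fun k => (hR k).2) n x
  obtain ⟨s, hs⟩ := exists_thread_extending (fun k => (hR k).1) ht
  exact ⟨s, (hs n le_rfl).trans htn⟩

variable [∀ n, MetricSpace (X n)]

namespace Thread

noncomputable def limDist (s t : Thread R) : ℝ :=
  limUnder atTop fun k => dist (s.1 k) (t.1 k)

variable (hdis : ∀ n, dis (R n) < ENNReal.ofReal (1 / 2 ^ (n + 1)))
include hdis

lemma dist_dist_succ_le (s t : Thread R) (k : ℕ) :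
    dist (dist (s.1 k) (t.1 k)) (dist (s.1 (k + 1)) (t.1 (k + 1))) ≤ 1 / 2 / 2 ^ k := by
  rw [Real.dist_eq, div_div, ← pow_succ']
  exact (abs_dist_sub_dist_lt_of_dis_lt (hdis k) (s.2 k) (t.2 k)).le

lemma tendsto_limDist (s t : Thread R) :
    Tendsto (fun k => dist (s.1 k) (t.1 k)) atTop (𝓝 (limDist s t)) :=
  (cauchySeq_of_le_geometric_two (dist_dist_succ_le hdis s t)).tendsto_limUnder

lemma abs_limDist_sub_dist_le (s t : Thread R) (n : ℕ) :
    |limDist s t - dist (s.1 n) (t.1 n)| ≤ 1 / 2 ^ n := by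
  rw [abs_sub_comm, ← Real.dist_eq]
  exact dist_le_of_le_geometric_two_of_tendsto (dist_dist_succ_le hdis s t)
    (tendsto_limDist hdis s t) n

noncomputable abbrev pseudoMetricSpace : PseudoMetricSpace (Thread R) where
  dist := limDist
  dist_self s := by simp only [limDist, dist_self]; exact tendsto_const_nhds.limUnder_eq
  dist_comm s t := by simp only [limDist, dist_comm]
  dist_triangle s t u :=
    le_of_tendsto_of_tendsto' (tendsto_limDist hdis s u)
      ((tendsto_limDist hdis s t).add (tendsto_limDist hdis t u))
      fun k => dist_triangle (s.1 k) (t.1 k) (u.1 k)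

end Thread

end Threads

/-- Completeness of the Gromov–Hausdorff class: given a sequence of nonempty metric
spaces `X 0, X 1, …` (playing the role of `X_1, X_2, …`) and correspondences
`R n` between `X n` and `X (n+1)` with `dis (R n) < 1/2^(n+1)`, there is a nonempty
metric space `Z` admitting, for each `n`, a correspondence with `X n` of distortion
at most `1/2^n`. -/
theorem gromovHausdorff_class_complete
    (X : ℕ → Type u) [∀ n, MetricSpace (X n)] [∀ n, Nonempty (X n)]
    (R : ∀ n, Set (X n × X (n + 1)))
    (hcorr : ∀ n, IsCorrespondence (R n))
    (hdis : ∀ n, dis (R n) < ENNReal.ofReal (1 / 2 ^ (n + 1))) :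
    ∃ (Z : Type u) (mZ : MetricSpace Z), Nonempty Z ∧
      ∀ n, ∃ R' : Set (Z × X n), IsCorrespondence R' ∧
        @dis Z (X n) mZ inferInstance R' ≤ ENNReal.ofReal (1 / 2 ^ n) := by
  let := Thread.pseudoMetricSpace hdis
  obtain ⟨s₀, -⟩ := exists_thread_through hcorr 0 (Classical.arbitrary (X 0))
  refine ⟨SeparationQuotient (Thread R), inferInstance, ⟨.mk s₀⟩, fun n =>
    ⟨Set.range fun s : Thread R => (SeparationQuotient.mk s, s.1 n), ⟨?_, ?_⟩, ?_⟩⟩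
  · intro z
    obtain ⟨s, rfl⟩ := SeparationQuotient.surjective_mk z
    exact ⟨s.1 n, s, rfl⟩
  · intro x
    obtain ⟨s, rfl⟩ := exists_thread_through hcorr n x
    exact ⟨SeparationQuotient.mk s, s, rfl⟩
  · refine dis_le_ofReal ?_
    rintro _ ⟨s, rfl⟩ _ ⟨t, rfl⟩
    rw [SeparationQuotient.dist_mk]
    exact Thread.abs_limDist_sub_dist_le hdis s t n
end

section
/- Let X and Y be nonempty metric spaces admitting a correspondence between them of finite distortion, and let λ > 0 be a real number. Then there exists a correspondence S between X and X with sup { |d_X(a,a') − λ·d_X(b,b')| : (a,b) ∈ S, (a',b') ∈ S } < ∞ if and only if there exists a correspondence T between Y and Y with sup { |d_Y(a,a') − λ·d_Y(b,b')| : (a,b) ∈ T, (a',b') ∈ T } < ∞. (Equivalently: the set Λ_X of all λ > 0 for which λX lies at finite Gromov–Hausdorff distance from X depends only on the cloud of X, not on the choice of X in the cloud.) -/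
/-!
Conjugating a self-correspondence `S` of `X` by a correspondence `R` between `X` and `Y`
gives the self-correspondence `R⁻¹ ∘ S ∘ R` of `Y`. Distortions are subadditive under
composition (the scale factors multiply), so if `R` has finite distortion and `S` has finite
`λ`-scaled distortion, then so does the conjugate; conjugating back by `R⁻¹` gives the converse.
-/

open ENNReal

open SetRel

lemma IsCorrespondence.inv {X Y : Type*} {R : SetRel X Y} (hR : IsCorrespondence R) :
    IsCorrespondence R.inv :=
  ⟨hR.2, hR.1⟩

lemma IsCorrespondence.comp {X Y Z : Type*} {R : SetRel X Y} {S : SetRel Y Z}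
    (hR : IsCorrespondence R) (hS : IsCorrespondence S) : IsCorrespondence (R ○ S) := by
  refine ⟨fun x ↦ ?_, fun z ↦ ?_⟩
  · obtain ⟨y, hxy⟩ := hR.1 x
    obtain ⟨z, hyz⟩ := hS.1 y
    exact ⟨z, y, hxy, hyz⟩
  · obtain ⟨y, hyz⟩ := hS.2 z
    obtain ⟨x, hxy⟩ := hR.2 y
    exact ⟨x, y, hxy, hyz⟩

section Distortion

variable {X Y Z : Type*} [MetricSpace X] [MetricSpace Y] [MetricSpace Z]

lemma disScaled_one (R : SetRel X Y) : disScaled 1 R = dis R := by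
  simp only [disScaled, dis, one_mul]

lemma dis_inv (R : SetRel X Y) : dis R.inv = dis R := by
  refine le_antisymm (iSup₂_le fun p hp ↦ iSup₂_le fun q hq ↦ ?_)
    (iSup₂_le fun p hp ↦ iSup₂_le fun q hq ↦ ?_) <;>
  · rw [abs_sub_comm]
    exact le_iSup₂_of_le p.swap hp (le_iSup₂_of_le q.swap hq le_rfl)

lemma ofReal_abs_le_disScaled (l : ℝ) {R : SetRel X Y} {p q : X × Y} (hp : p ∈ R)
    (hq : q ∈ R) : ENNReal.ofReal |dist p.1 q.1 - l * dist p.2 q.2| ≤ disScaled l R :=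
  le_iSup₂_of_le p hp (le_iSup₂_of_le q hq le_rfl)

lemma disScaled_comp_le (l m : ℝ) (R : SetRel X Y) (S : SetRel Y Z) :
    disScaled (l * m) (R ○ S) ≤ disScaled l R + ENNReal.ofReal |l| * disScaled m S := by
  refine iSup₂_le ?_
  rintro ⟨x, z⟩ ⟨y, hxy, hyz⟩
  refine iSup₂_le ?_
  rintro ⟨x', z'⟩ ⟨y', hxy', hyz'⟩
  have triangle : |dist x x' - l * m * dist z z'| ≤
      |dist x x' - l * dist y y'| + |l| * |dist y y' - m * dist z z'| := by
    rw [← abs_mul]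
    calc |dist x x' - l * m * dist z z'|
        = |(dist x x' - l * dist y y') + l * (dist y y' - m * dist z z')| := by
          congr 1; ring
      _ ≤ _ := abs_add_le _ _
  calc ENNReal.ofReal |dist x x' - l * m * dist z z'|
      ≤ ENNReal.ofReal (|dist x x' - l * dist y y'| + |l| * |dist y y' - m * dist z z'|) :=
        ENNReal.ofReal_le_ofReal triangle
    _ = ENNReal.ofReal |dist x x' - l * dist y y'|
          + ENNReal.ofReal |l| * ENNReal.ofReal |dist y y' - m * dist z z'| := by
        rw [ENNReal.ofReal_add (abs_nonneg _) (by positivity), ENNReal.ofReal_mul (abs_nonneg _)]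
    _ ≤ disScaled l R + ENNReal.ofReal |l| * disScaled m S := by
        gcongr
        · exact ofReal_abs_le_disScaled l (p := (x, y)) hxy hxy'
        · exact ofReal_abs_le_disScaled m (p := (y, z)) hyz hyz'

lemma disScaled_conj_lt_top {l : ℝ} {R : SetRel X Y} {S : SetRel X X} (hR : dis R < ⊤)
    (hS : disScaled l S < ⊤) : disScaled l (R.inv ○ S ○ R) < ⊤ := by
  have hconj := (disScaled_comp_le (1 * l) 1 (R.inv ○ S) R).trans
    (add_le_add_left (disScaled_comp_le 1 l R.inv S) _)
  simp only [one_mul, mul_one, abs_one, ENNReal.ofReal_one, disScaled_one, dis_inv] at hconj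
  refine hconj.trans_lt ?_
  finiteness

end Distortion

theorem stabilizer_cloud_invariant_general {X Y : Type*} [MetricSpace X] [MetricSpace Y]
    (R : Set (X × Y)) (hR : IsCorrespondence R) (hdis : dis R < ⊤)
    (lam : ℝ) :
    (∃ S : Set (X × X), IsCorrespondence S ∧ disScaled lam S < ⊤) ↔
      (∃ T : Set (Y × Y), IsCorrespondence T ∧ disScaled lam T < ⊤) := by
  constructor
  · rintro ⟨S, hS, hSd⟩
    exact ⟨SetRel.inv R ○ S ○ R, (hR.inv.comp hS).comp hR, disScaled_conj_lt_top hdis hSd⟩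
  · rintro ⟨T, hT, hTd⟩
    exact ⟨R ○ T ○ SetRel.inv R, (hR.comp hT).comp hR.inv,
      disScaled_conj_lt_top (R := SetRel.inv R) ((dis_inv R).trans_lt hdis) hTd⟩

/-- The stabilizer `Λ_X` only depends on the cloud: if `X` and `Y` are at finite
Gromov–Hausdorff distance (i.e., admit a correspondence of finite distortion),
then for every `λ > 0`, the space `λX` is at finite distance from `X` iff `λY`
is at finite distance from `Y`. -/
theorem stabilizer_cloud_invariant {X Y : Type*} [MetricSpace X] [MetricSpace Y]
    [Nonempty X] [Nonempty Y]
    (R : Set (X × Y)) (hR : IsCorrespondence R) (hdis : dis R < ⊤)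
    (lam : ℝ) (hlam : 0 < lam) :
    (∃ S : Set (X × X), IsCorrespondence S ∧ disScaled lam S < ⊤) ↔
      (∃ T : Set (Y × Y), IsCorrespondence T ∧ disScaled lam T < ⊤) :=
  stabilizer_cloud_invariant_general R hR hdis lam
end

section
/- Let X and Y be unbounded metric spaces and suppose there exist points x₀ ∈ X and y₀ ∈ Y such that the quantity Δ(r) = inf { |d_X(x,x') − d_Y(y,y')| : x, x' ∈ X with d(x₀,x) ≥ r, d(x₀,x') ≥ r, x ≠ x', and y, y' ∈ Y with d(y₀,y) ≥ r, d(y₀,y') ≥ r, y ≠ y' } tends to ∞ as r → ∞. Then every correspondence R between X and Y satisfies dis R = ∞; consequently, the Gromov–Hausdorff distance between X and Y is infinite. -/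
open ENNReal

/-
If `dis R` were finite, pick `(x₀, y₁) ∈ R`: every `(x, y) ∈ R` then has `dist y₀ y`
within `K = dis R + dist y₀ y₁` of `dist x₀ x`. Since `X` is unbounded we can take
`(x, y), (x', y') ∈ R` with `r + K ≤ dist x₀ x` and `dist x₀ x + 2K < dist x₀ x'`; then
`x, x'` and `y, y'` are distinct points outside the `r`-balls, so
`Δ(r) ≤ |dist x x' - dist y y'| ≤ dis R` for every `r`, contradicting `Δ(r) → ∞`.
-/

section

variable {X Y : Type*} [MetricSpace X] [MetricSpace Y]

lemma exists_le_dist_of_ediam_univ_eq_top (hX : Metric.ediam (Set.univ : Set X) = ⊤)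
    (x₀ : X) (C : ℝ) : ∃ x, C ≤ dist x₀ x := by
  by_contra! h
  exact Metric.ediam_eq_top_iff_unbounded.1 hX <|
    Metric.isBounded_ball.subset fun x _ => Metric.mem_ball'.2 (h x)

lemma ofReal_abs_dist_sub_dist_le_dis {R : Set (X × Y)} {p q : X × Y} (hp : p ∈ R)
    (hq : q ∈ R) : ENNReal.ofReal |dist p.1 q.1 - dist p.2 q.2| ≤ dis R :=
  le_iSup₂_of_le p hp <| le_iSup₂_of_le q hq le_rfl

lemma abs_dist_sub_dist_le_toReal_dis {R : Set (X × Y)} (hR : dis R ≠ ⊤) {p q : X × Y}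
    (hp : p ∈ R) (hq : q ∈ R) : |dist p.1 q.1 - dist p.2 q.2| ≤ (dis R).toReal :=
  (ENNReal.ofReal_le_iff_le_toReal hR).1 (ofReal_abs_dist_sub_dist_le_dis hp hq)

lemma abs_dist_sub_dist_le_of_mem {R : Set (X × Y)} (hR : dis R ≠ ⊤) {x₀ : X} {y₀ y₁ : Y}
    (h₁ : (x₀, y₁) ∈ R) {p : X × Y} (hp : p ∈ R) :
    |dist y₀ p.2 - dist x₀ p.1| ≤ (dis R).toReal + dist y₀ y₁ := by
  have hy₀ : |dist y₀ p.2 - dist y₁ p.2| ≤ dist y₀ y₁ := abs_dist_sub_le _ _ _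
  have hx₀ : |dist x₀ p.1 - dist y₁ p.2| ≤ (dis R).toReal :=
    abs_dist_sub_dist_le_toReal_dis hR h₁ hp
  rw [abs_le] at hy₀ hx₀ ⊢
  constructor <;> linarith

/-- The function `Δ` of the informal statement. -/
noncomputable def farDistortion (x₀ : X) (y₀ : Y) (r : ℝ) : ℝ≥0∞ :=
  ⨅ (x : X) (_ : r ≤ dist x₀ x) (x' : X) (_ : r ≤ dist x₀ x') (_ : x ≠ x')
    (y : Y) (_ : r ≤ dist y₀ y) (y' : Y) (_ : r ≤ dist y₀ y') (_ : y ≠ y'),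
    ENNReal.ofReal |dist x x' - dist y y'|

lemma farDistortion_le {x₀ x x' : X} {y₀ y y' : Y} {r : ℝ} (hx : r ≤ dist x₀ x)
    (hx' : r ≤ dist x₀ x') (hxx' : x ≠ x') (hy : r ≤ dist y₀ y) (hy' : r ≤ dist y₀ y')
    (hyy' : y ≠ y') : farDistortion x₀ y₀ r ≤ ENNReal.ofReal |dist x x' - dist y y'| :=
  iInf₂_le_of_le x hx <| iInf₂_le_of_le x' hx' <| iInf_le_of_le hxx' <|
    iInf₂_le_of_le y hy <| iInf₂_le_of_le y' hy' <| iInf_le _ hyy'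

lemma farDistortion_le_dis (hX : Metric.ediam (Set.univ : Set X) = ⊤) {R : Set (X × Y)}
    (hR : IsCorrespondence R) (hD : dis R ≠ ⊤) (x₀ : X) (y₀ : Y) (r : ℝ) :
    farDistortion x₀ y₀ r ≤ dis R := by
  obtain ⟨y₁, h₁⟩ := hR.1 x₀
  set K := (dis R).toReal + dist y₀ y₁
  have hK : 0 ≤ K := by positivity
  obtain ⟨x, hx⟩ := exists_le_dist_of_ediam_univ_eq_top hX x₀ (r + K)
  obtain ⟨x', hx'⟩ := exists_le_dist_of_ediam_univ_eq_top hX x₀ (dist x₀ x + 2 * K + 1)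
  obtain ⟨y, hxy⟩ := hR.1 x
  obtain ⟨y', hxy'⟩ := hR.1 x'
  have hy : |dist y₀ y - dist x₀ x| ≤ K := abs_dist_sub_dist_le_of_mem hD h₁ hxy
  have hy' : |dist y₀ y' - dist x₀ x'| ≤ K := abs_dist_sub_dist_le_of_mem hD h₁ hxy'
  rw [abs_le] at hy hy'
  have hxx' : dist x₀ x < dist x₀ x' := by linarith
  have hyy' : dist y₀ y < dist y₀ y' := by linarith
  calc farDistortion x₀ y₀ r ≤ ENNReal.ofReal |dist x x' - dist y y'| :=
        farDistortion_le (by linarith) (by linarith) (ne_of_apply_ne _ hxx'.ne)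
          (by linarith) (by linarith) (ne_of_apply_ne _ hyy'.ne)
    _ ≤ dis R := ofReal_abs_dist_sub_dist_le_dis hxy hxy'

end

theorem dis_eq_top_of_delta_tendsto_top_general {X Y : Type*}
    [MetricSpace X] [MetricSpace Y]
    (hX : EMetric.diam (Set.univ : Set X) = ⊤)
    (x₀ : X) (y₀ : Y)
    (hΔ : Filter.Tendsto
      (fun r : ℝ =>
        ⨅ (x : X) (_ : r ≤ dist x₀ x) (x' : X) (_ : r ≤ dist x₀ x') (_ : x ≠ x')
          (y : Y) (_ : r ≤ dist y₀ y) (y' : Y) (_ : r ≤ dist y₀ y') (_ : y ≠ y'),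
          ENNReal.ofReal |dist x x' - dist y y'|)
      Filter.atTop (nhds ⊤)) :
    ∀ R : Set (X × Y), IsCorrespondence R → dis R = ⊤ := by
  intro R hR
  by_contra hD
  exact hD <| top_le_iff.1 <|
    le_of_tendsto' (hΔ : Filter.Tendsto (farDistortion x₀ y₀) _ _)
      (farDistortion_le_dis hX hR hD x₀ y₀)

/-- Theorem 4.2: if `X`, `Y` are unbounded and for some `x₀ ∈ X`, `y₀ ∈ Y` the
quantity `Δ(r) = inf { ||xx'| − |yy'|| : x,x' ∉ U_r(x₀), x ≠ x', y,y' ∉ U_r(y₀), y ≠ y' }`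
tends to `∞` as `r → ∞`, then every correspondence between `X` and `Y` has infinite
distortion; hence `d_GH(X, Y) = ∞`. -/
theorem dis_eq_top_of_delta_tendsto_top {X Y : Type*}
    [MetricSpace X] [MetricSpace Y]
    (hX : EMetric.diam (Set.univ : Set X) = ⊤)
    (hY : EMetric.diam (Set.univ : Set Y) = ⊤)
    (x₀ : X) (y₀ : Y)
    (hΔ : Filter.Tendsto
      (fun r : ℝ =>
        ⨅ (x : X) (_ : r ≤ dist x₀ x) (x' : X) (_ : r ≤ dist x₀ x') (_ : x ≠ x')
          (y : Y) (_ : r ≤ dist y₀ y) (y' : Y) (_ : r ≤ dist y₀ y') (_ : y ≠ y'),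
          ENNReal.ofReal |dist x x' - dist y y'|)
      Filter.atTop (nhds ⊤)) :
    ∀ R : Set (X × Y), IsCorrespondence R → dis R = ⊤ :=
  dis_eq_top_of_delta_tendsto_top_general hX x₀ y₀ hΔ
end

section
/- Let p be a prime number greater than 2. Then there are no positive integers m, l, n, k with m > l and n > k such that p^m − p^l = 2·(p^n − p^k). -/
/-!
Let `j = min l k` and rewrite the equation as `q^m - 2 q^n = q^l - 2 q^k`. Every term except the
lowest power on the right is divisible by `q^(j+1)`, so cancelling `q^j` shows that `q` divides
`1` (if `l ≤ k`) or `2` (if `k < l`). Either way `q ∣ 2`, which is impossible for `q > 2`.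
-/

section

variable {R : Type*} [CommRing R] [IsDomain R]

lemma dvd_of_mul_pow_eq_of_pow_succ_dvd {q c x : R} {j : ℕ} (hq : q ≠ 0)
    (hx : q ^ (j + 1) ∣ x) (h : c * q ^ j = x) : q ∣ c := by
  rw [← h, pow_succ, mul_comm c] at hx
  exact (mul_dvd_mul_iff_left (pow_ne_zero j hq)).mp hx

lemma dvd_two_of_pow_sub_eq_two_mul {q : R} (hq : q ≠ 0) {m l n k : ℕ} (hlm : l < m)
    (hkn : k < n) (h : q ^ m - q ^ l = 2 * (q ^ n - q ^ k)) : q ∣ 2 := by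
  have hdvd {i e : ℕ} (hie : i < e) : q ^ (i + 1) ∣ q ^ e := pow_dvd_pow q hie
  rcases lt_trichotomy l k with hlk | rfl | hkl
  · have : q ∣ 1 := dvd_of_mul_pow_eq_of_pow_succ_dvd hq
      (dvd_sub (dvd_add (hdvd hlm) ((hdvd hlk).mul_left 2)) ((hdvd (hlk.trans hkn)).mul_left 2))
      (by linear_combination -h)
    exact this.trans (one_dvd 2)
  · have : q ∣ 1 := dvd_of_mul_pow_eq_of_pow_succ_dvd hq
      (dvd_sub ((hdvd hkn).mul_left 2) (hdvd hlm)) (by linear_combination h)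
    exact this.trans (one_dvd 2)
  · exact dvd_of_mul_pow_eq_of_pow_succ_dvd hq
      (dvd_add (dvd_sub ((hdvd hkn).mul_left 2) (hdvd (hkl.trans hlm))) (hdvd hkl))
      (by linear_combination h)

end

theorem no_solution_pow_sub_eq_two_mul_general (p : ℕ) (hp2 : 2 < p) :
    ¬ ∃ m l n k : ℕ, 0 < l ∧ 0 < k ∧ l < m ∧ k < n ∧
      (p : ℤ) ^ m - (p : ℤ) ^ l = 2 * ((p : ℤ) ^ n - (p : ℤ) ^ k) := by
  rintro ⟨m, l, n, k, -, -, hlm, hkn, h⟩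
  have hp2' : (2 : ℤ) < p := by exact_mod_cast hp2
  have hdvd : (p : ℤ) ∣ 2 := dvd_two_of_pow_sub_eq_two_mul (by omega) hlm hkn h
  have := Int.le_of_dvd two_pos hdvd
  omega

/-- The number-theoretic core of Example 4.3: for a prime `p > 2` there are no
positive integers `m > l` and `n > k` with `p^m − p^l = 2(p^n − p^k)`. -/
theorem no_solution_pow_sub_eq_two_mul (p : ℕ) (hp : p.Prime) (hp2 : 2 < p) :
    ¬ ∃ m l n k : ℕ, 0 < l ∧ 0 < k ∧ l < m ∧ k < n ∧
      (p : ℤ) ^ m - (p : ℤ) ^ l = 2 * ((p : ℤ) ^ n - (p : ℤ) ^ k) :=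
  no_solution_pow_sub_eq_two_mul_general p hp2
end

section
/- Let p be a prime number greater than 2 and let X = { p^n : n ∈ ℕ, n ≥ 1 } ⊆ ℝ with the metric induced from the real line. Then every correspondence R between X and X satisfies sup { |d(x,x') − 2·d(y,y')| : (x,y) ∈ R, (x',y') ∈ R } = ∞. (Equivalently: the Gromov–Hausdorff distance between X and 2X is infinite, so X is a drop in its cloud.) -/
/-!
Measured from the origin, the points of `X` are `p^n` and those of `2X` are `2p^m`, and since
`p ≥ 3` these never come close: `|p^(k+1) - 2p^m| ≥ p^k`. Fix the partner `p^a` of `p` under `R`.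
Comparing `(p^(k+1), p^m) ∈ R` with `(p, p^a) ∈ R`, the distortion is at least
`|p^(k+1) - 2p^m| - p - 2p^a ≥ p^k - p - 2p^a`, which is unbounded in `k`.
-/

open ENNReal

theorem disScaled_eq_top_of_forall_exists_lt {X Y : Type*} [MetricSpace X] [MetricSpace Y]
    {l : ℝ} {R : Set (X × Y)}
    (h : ∀ C : ℝ, ∃ q ∈ R, ∃ q' ∈ R, C < |dist q.1 q'.1 - l * dist q.2 q'.2|) :
    disScaled l R = ⊤ := by
  refine ENNReal.eq_top_of_forall_nnreal_le fun r => ?_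
  obtain ⟨q, hq, q', hq', hlt⟩ := h r
  calc (r : ℝ≥0∞) = ENNReal.ofReal r := (ENNReal.ofReal_coe_nnreal).symm
    _ ≤ ENNReal.ofReal |dist q.1 q'.1 - l * dist q.2 q'.2| := ENNReal.ofReal_le_ofReal hlt.le
    _ ≤ disScaled l R := le_iSup₂_of_le q hq (le_iSup₂_of_le q' hq' le_rfl)

theorem abs_dist_sub_mul_dist_to_base_le {X Y : Type*} [PseudoMetricSpace X]
    [PseudoMetricSpace Y] {l : ℝ} (hl : 0 ≤ l) (o : X) (o' : Y) (x x' : X) (y y' : Y) :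
    |dist x o - l * dist y o'| - dist x' o - l * dist y' o' ≤
      |dist x x' - l * dist y y'| := by
  have hx₁ := dist_triangle x x' o
  have hx₂ := dist_triangle x o x'
  have hy₁ := mul_le_mul_of_nonneg_left (dist_triangle y y' o') hl
  have hy₂ := mul_le_mul_of_nonneg_left (dist_triangle y o' y') hl
  rw [dist_comm o x'] at hx₂
  rw [dist_comm o' y'] at hy₂
  rcases abs_cases (dist x o - l * dist y o') with ⟨h₁, _⟩ | ⟨h₁, _⟩ <;>
    rcases abs_cases (dist x x' - l * dist y y') with ⟨h₂, _⟩ | ⟨h₂, _⟩ <;>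
    rw [h₁, h₂] <;> linarith

theorem pow_le_abs_pow_succ_sub_two_mul_pow {p : ℝ} (hp : 3 ≤ p) (k m : ℕ) :
    p ^ k ≤ |p ^ (k + 1) - 2 * p ^ m| := by
  have hpk : 0 < p ^ k := by positivity
  rw [pow_succ]
  rcases le_or_gt m k with hmk | hkm
  · have := pow_le_pow_right₀ (by linarith : 1 ≤ p) hmk
    rw [abs_of_nonneg (by nlinarith)]
    nlinarith
  · have := pow_le_pow_right₀ (by linarith : 1 ≤ p) (Nat.succ_le_of_lt hkm)
    rw [pow_succ] at this
    rw [abs_of_nonpos (by nlinarith)]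
    nlinarith

theorem geometric_progression_drop_general (p : ℕ) (hp2 : 2 < p)
    (Xs : Set ℝ) (hXs : Xs = {x : ℝ | ∃ n : ℕ, 1 ≤ n ∧ x = (p : ℝ) ^ n})
    (R : Set (Xs × Xs)) (hR : IsCorrespondence R) :
    disScaled 2 R = ⊤ := by
  subst hXs
  have hp3 : (3 : ℝ) ≤ p := by exact_mod_cast hp2
  refine disScaled_eq_top_of_forall_exists_lt fun C => ?_
  obtain ⟨y₀, hy₀⟩ := hR.1 ⟨p, 1, le_rfl, (pow_one _).symm⟩
  obtain ⟨a, -, ha⟩ := y₀.2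
  obtain ⟨k, hk⟩ := pow_unbounded_of_one_lt (C + p + 2 * (p : ℝ) ^ a) (by linarith : (1 : ℝ) < p)
  obtain ⟨y₁, hy₁⟩ := hR.1 ⟨(p : ℝ) ^ (k + 1), k + 1, Nat.le_add_left 1 k, rfl⟩
  obtain ⟨m, -, hm⟩ := y₁.2
  refine ⟨_, hy₁, _, hy₀, ?_⟩
  have hbase := abs_dist_sub_mul_dist_to_base_le zero_le_two (0 : ℝ) (0 : ℝ)
    ((p : ℝ) ^ (k + 1)) p (y₁ : ℝ) (y₀ : ℝ)
  simp only [Subtype.dist_eq, Real.dist_eq, sub_zero, ha, hm] at hbase ⊢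
  simp only [abs_of_pos (pow_pos (by linarith : (0 : ℝ) < p) _), Nat.abs_cast] at hbase
  linarith [pow_le_abs_pow_succ_sub_two_mul_pow hp3 k m]

/-- Example 4.3: for a prime `p > 2` and `X = {p, p², p³, …} ⊆ ℝ`, every
correspondence `R` between `X` and `X` has
`sup { |d(x,x') − 2·d(y,y')| : (x,y), (x',y') ∈ R } = ∞`; equivalently,
`d_GH(X, 2X) = ∞`, so `X` is a drop in its cloud. -/
theorem geometric_progression_drop (p : ℕ) (hp : p.Prime) (hp2 : 2 < p)
    (Xs : Set ℝ) (hXs : Xs = {x : ℝ | ∃ n : ℕ, 1 ≤ n ∧ x = (p : ℝ) ^ n})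
    (R : Set (Xs × Xs)) (hR : IsCorrespondence R) :
    disScaled 2 R = ⊤ :=
  geometric_progression_drop_general p hp2 Xs hXs R hR
end

section
/- Let p be a prime number greater than 2 and let X = { p^n : n ∈ ℕ, n ≥ 1 } ⊆ ℝ with the metric induced from the real line. Then there exists a correspondence R between X and X such that sup { |d(x,x') − p·d(y,y')| : (x,y) ∈ R, (x',y') ∈ R } < ∞. (Equivalently: the Gromov–Hausdorff distance between X and pX is finite, so multiplication by p keeps X in its cloud even though multiplication by 2 removes it from the cloud.) -/
/-! Multiplication by `p` maps `{p, p², p³, …}` onto itself minus the point `p`. Relating each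
`p ^ (n + 1)` to `p ^ n`, and `p` to itself, is therefore a correspondence each of whose pairs
lies within `|p² - p|` of the graph of `y ↦ p * y`; by the triangle inequality the `p`-scaled
distortion is at most twice that. -/

open ENNReal

lemma disScaled_le_of_dist_mul_le {Xs Ys : Set ℝ} {l C : ℝ} (hl : 0 ≤ l) {R : Set (Xs × Ys)}
    (hR : ∀ q ∈ R, dist (q.1 : ℝ) (l * q.2) ≤ C) : disScaled l R ≤ ENNReal.ofReal (2 * C) := by
  refine iSup₂_le fun q hq => iSup₂_le fun q' hq' => ENNReal.ofReal_le_ofReal ?_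
  have hscale : l * dist q.2 q'.2 = dist (l * (q.2 : ℝ)) (l * q'.2) := by
    rw [Subtype.dist_eq, Real.dist_eq, Real.dist_eq, ← mul_sub, abs_mul, abs_of_nonneg hl]
  calc |dist q.1 q'.1 - l * dist q.2 q'.2|
      = dist (dist (q.1 : ℝ) q'.1) (dist (l * (q.2 : ℝ)) (l * q'.2)) := by
        rw [hscale]; rfl
    _ ≤ dist (q.1 : ℝ) (l * q.2) + dist (q'.1 : ℝ) (l * q'.2) := dist_dist_dist_le _ _ _ _
    _ ≤ 2 * C := by linarith [hR q hq, hR q' hq']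

def positivePowers (p : ℝ) : Set ℝ := {x | ∃ n : ℕ, 1 ≤ n ∧ x = p ^ n}

def scalingRel (p : ℝ) : Set (positivePowers p × positivePowers p) :=
  {q | (q.1 : ℝ) = p * q.2 ∨ ((q.1 : ℝ) = p ∧ (q.2 : ℝ) = p)}

lemma pow_mem_positivePowers (p : ℝ) {n : ℕ} (hn : 1 ≤ n) : p ^ n ∈ positivePowers p :=
  ⟨n, hn, rfl⟩

lemma isCorrespondence_scalingRel (p : ℝ) : IsCorrespondence (scalingRel p) := by
  constructor
  · rintro ⟨x, n, hn, rfl⟩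
    obtain rfl | ⟨m, hm, rfl⟩ : n = 1 ∨ ∃ m, 1 ≤ m ∧ n = m + 1 :=
      (Nat.eq_or_lt_of_le hn).imp Eq.symm fun h => ⟨n - 1, by omega, by omega⟩
    · exact ⟨⟨p, 1, le_rfl, (pow_one p).symm⟩, Or.inr ⟨pow_one p, rfl⟩⟩
    · exact ⟨⟨p ^ m, pow_mem_positivePowers p hm⟩, Or.inl (pow_succ' p m)⟩
  · rintro ⟨y, n, hn, rfl⟩
    exact ⟨⟨p ^ (n + 1), pow_mem_positivePowers p (by omega)⟩, Or.inl (pow_succ' p n)⟩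

lemma dist_mul_le_of_mem_scalingRel {p : ℝ} {q : positivePowers p × positivePowers p}
    (hq : q ∈ scalingRel p) : dist (q.1 : ℝ) (p * q.2) ≤ dist p (p * p) := by
  rcases hq with h | ⟨h₁, h₂⟩
  · rw [h, dist_self]
    exact dist_nonneg
  · rw [h₁, h₂]

theorem geometric_progression_stays_under_p_general (p : ℕ)
    (Xs : Set ℝ) (hXs : Xs = {x : ℝ | ∃ n : ℕ, 1 ≤ n ∧ x = (p : ℝ) ^ n}) :
    ∃ R : Set (Xs × Xs), IsCorrespondence R ∧ disScaled (p : ℝ) R < ⊤ := by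
  subst hXs
  refine ⟨scalingRel p, isCorrespondence_scalingRel p, ?_⟩
  have hbound := disScaled_le_of_dist_mul_le (Nat.cast_nonneg p) fun q hq =>
    dist_mul_le_of_mem_scalingRel (p := p) hq
  exact hbound.trans_lt ENNReal.ofReal_lt_top

/-- Remark 4.4: for a prime `p > 2` and `X = {p, p², p³, …} ⊆ ℝ`, there is a
correspondence `R` between `X` and `X` with
`sup { |d(x,x') − p·d(y,y')| : (x,y), (x',y') ∈ R } < ∞`; equivalently,
`d_GH(X, pX) < ∞`, so multiplication by `p` keeps `X` in its cloud. -/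
theorem geometric_progression_stays_under_p (p : ℕ) (hp : p.Prime) (hp2 : 2 < p)
    (Xs : Set ℝ) (hXs : Xs = {x : ℝ | ∃ n : ℕ, 1 ≤ n ∧ x = (p : ℝ) ^ n}) :
    ∃ R : Set (Xs × Xs), IsCorrespondence R ∧ disScaled (p : ℝ) R < ⊤ :=
  geometric_progression_stays_under_p_general p Xs hXs
end

section
/- Let q ≥ 2 be a natural number, let φ : ℕ → ℕ be a monotonically increasing function with φ(n) ≥ n for all n, and set X_φ = { q^{φ(n)} : n ∈ ℕ, n ≥ 1 } ⊆ ℝ with the metric induced from the real line. Let λ be a positive rational number, and suppose there exists a correspondence R between X_φ and X_φ with sup { |d(x,x') − λ·d(y,y')| : (x,y), (x',y') ∈ R } < ∞ (i.e., λ·X_φ lies at finite Gromov–Hausdorff distance from X_φ). Then for every M there exist natural numbers n > k > M and m > l > M such that λ = (q^{φ(n)} − q^{φ(k)}) / (q^{φ(m)} − q^{φ(l)}). -/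
open ENNReal

/-! For each point `yₙ = q^φ(n+1)` pick a partner `xₙ = q^φ(gₙ)` under the correspondence.
Bounded distortion against the pair `(x₀, y₀)` forces `xₙ - λ yₙ` to stay within a bounded
distance of `x₀ - λ y₀` once `yₙ` is large, and in particular `xₙ → ∞`. Writing `λ = a / b`, the numbers `b xₙ - a yₙ` are bounded integers, so by pigeonhole
two indices `u < v` give `x_v - x_u = λ (y_v - y_u)`, with all exponents beyond `M`. -/

open Filter

theorem abs_dist_sub_mul_dist_le_of_disScaled_lt_top {X Y : Type*} [MetricSpace X]
    [MetricSpace Y] {l : ℝ} {R : Set (X × Y)} (h : disScaled l R < ⊤) {p p' : X × Y}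
    (hp : p ∈ R) (hp' : p' ∈ R) :
    |dist p.1 p'.1 - l * dist p.2 p'.2| ≤ (disScaled l R).toReal := by
  have := ENNReal.toReal_mono h.ne (le_iSup₂_of_le p hp (le_iSup₂_of_le p' hp' le_rfl) :
    ENNReal.ofReal |dist p.1 p'.1 - l * dist p.2 p'.2| ≤ disScaled l R)
  rwa [ENNReal.toReal_ofReal (abs_nonneg _)] at this

theorem eventually_abs_sub_mul_sub_le_of_abs_abs_sub_le {ι : Type*} {f : Filter ι}
    {x y : ι → ℝ} {x₀ y₀ l C : ℝ} (hl : 0 < l) (hx : ∀ i, 0 ≤ x i)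
    (hy : Tendsto y f atTop) (h : ∀ i, |(|x i - x₀|) - l * (|y i - y₀|)| ≤ C) :
    ∀ᶠ i in f, |(x i - l * y i) - (x₀ - l * y₀)| ≤ C := by
  filter_upwards [hy.eventually_gt_atTop y₀, hy.eventually_gt_atTop (y₀ + (x₀ + C) / l)]
    with i hy₀ hbig
  have hbig' : x₀ + C < l * (y i - y₀) := by
    rw [← div_lt_iff₀' hl]; linarith
  have hi := h i
  rw [abs_of_pos (sub_pos.2 hy₀)] at hi
  -- below `x₀`, nonnegativity would cap `|x i - x₀|` by `x₀`
  have hx₀ : x₀ ≤ x i := by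
    by_contra! hlt
    rw [abs_of_neg (sub_neg.2 hlt)] at hi
    linarith [(abs_le.1 hi).1, hx i]
  rw [abs_of_nonneg (sub_nonneg.2 hx₀)] at hi
  convert hi using 2
  ring

theorem tendsto_atTop_of_abs_sub_mul_sub_le {ι : Type*} {f : Filter ι} {x y : ι → ℝ}
    {l c C : ℝ} (hl : 0 < l) (hy : Tendsto y f atTop)
    (h : ∀ᶠ i in f, |(x i - l * y i) - c| ≤ C) : Tendsto x f atTop := by
  refine tendsto_atTop_mono' f ?_
    (tendsto_atTop_add_const_right f (c - C) (hy.const_mul_atTop hl))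
  filter_upwards [h] with i hi
  linarith [(abs_le.1 hi).1]

theorem exists_lt_sub_rat_mul_eq {P : ℕ → Prop} (r : ℚ) {x y : ℕ → ℤ} {c C : ℝ}
    (h : ∀ᶠ n in atTop, P n ∧ |((x n : ℝ) - r * y n) - c| ≤ C) :
    ∃ u v, u < v ∧ P u ∧ P v ∧ (x u : ℝ) - r * y u = x v - r * y v := by
  set s := {n | P n ∧ |((x n : ℝ) - r * y n) - c| ≤ C}
  have hs : s.Infinite := Nat.frequently_atTop_iff_infinite.mp h.frequently
  have hden : (0 : ℝ) < r.den := by exact_mod_cast r.den_pos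
  -- clearing the denominator of `r` makes `x n - r * y n` take values in `ℤ / r.den`
  set F : ℕ → ℤ := fun n => r.den * x n - r.num * y n
  have hF : ∀ n, (F n : ℝ) = r.den * ((x n : ℝ) - r * y n) := by
    intro n
    simp only [F, Rat.cast_def]
    push_cast
    field_simp
  set B := ⌈(r.den : ℝ) * (|c| + C)⌉
  have hmaps : Set.MapsTo F s (Set.Icc (-B) B) := by
    rintro n ⟨-, hn⟩
    have : |(F n : ℝ)| ≤ r.den * (|c| + C) := by
      rw [hF, abs_mul, abs_of_pos hden]
      gcongr
      linarith [abs_sub_abs_le_abs_sub ((x n : ℝ) - r * y n) c]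
    have hB : |F n| ≤ B := Int.cast_le.1 ((Int.cast_abs (R := ℝ) ▸ this).trans (Int.le_ceil _))
    exact abs_le.1 hB
  obtain ⟨u, ⟨hu, -⟩, v, ⟨hv, -⟩, huv, hFuv⟩ :=
    hs.exists_lt_map_eq_of_mapsTo hmaps (Set.finite_Icc _ _)
  refine ⟨u, v, huv, hu, hv, mul_left_cancel₀ hden.ne' ?_⟩
  rw [← hF, ← hF, hFuv]

theorem rational_stabilizer_form_general (q : ℕ) (hq : 2 ≤ q)
    (φ : ℕ → ℕ) (hmono : StrictMono φ)
    (Xs : Set ℝ) (hXs : Xs = {x : ℝ | ∃ n : ℕ, 1 ≤ n ∧ x = (q : ℝ) ^ φ n})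
    (lam : ℚ) (hlam : 0 < lam)
    (hfin : ∃ R : Set (Xs × Xs), IsCorrespondence R ∧ disScaled (lam : ℝ) R < ⊤) :
    ∀ M : ℕ, ∃ n k m l : ℕ, M < k ∧ k < n ∧ M < l ∧ l < m ∧
      (lam : ℝ) =
        ((q : ℝ) ^ φ n - (q : ℝ) ^ φ k) / ((q : ℝ) ^ φ m - (q : ℝ) ^ φ l) := by
  intro M
  obtain ⟨R, ⟨-, hR⟩, hdis⟩ := hfin
  have hq1 : (1 : ℝ) < q := by exact_mod_cast hq
  have hlam' : (0 : ℝ) < lam := by exact_mod_cast hlam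
  have hpow : StrictMono fun n => (q : ℝ) ^ φ n := (pow_right_strictMono₀ hq1).comp hmono
  have hmem : ∀ n, (q : ℝ) ^ φ (n + 1) ∈ Xs := fun n => by
    rw [hXs]
    exact ⟨n + 1, by omega, rfl⟩
  choose xs hxs using fun n => hR ⟨_, hmem n⟩
  have hXs_pow : ∀ x ∈ Xs, ∃ m, x = (q : ℝ) ^ φ m := by
    rw [hXs]
    rintro x ⟨m, -, rfl⟩
    exact ⟨m, rfl⟩
  choose g hg using fun n => hXs_pow _ (xs n).prop
  have hy : Tendsto (fun n => (q : ℝ) ^ φ (n + 1)) atTop atTop :=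
    (tendsto_pow_atTop_atTop_of_one_lt hq1).comp
      (hmono.tendsto_atTop.comp (tendsto_add_atTop_nat 1))
  have hnear := eventually_abs_sub_mul_sub_le_of_abs_abs_sub_le
    (x := fun n => (q : ℝ) ^ φ (g n)) hlam' (fun n => by positivity) hy fun n => by
    simpa [Subtype.dist_eq, Real.dist_eq, hg] using
      abs_dist_sub_mul_dist_le_of_disScaled_lt_top hdis (hxs n) (hxs 0)
  have hx := tendsto_atTop_of_abs_sub_mul_sub_le hlam' hy hnear
  obtain ⟨u, v, huv, ⟨hMu, hxu⟩, -, heq⟩ := exists_lt_sub_rat_mul_eq lam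
    (x := fun n => (q : ℤ) ^ φ (g n)) (y := fun n => (q : ℤ) ^ φ (n + 1))
    (((eventually_ge_atTop M).and (hx.eventually_gt_atTop ((q : ℝ) ^ φ M))).and
      (by simpa using hnear))
  push_cast at heq
  have hyuv : (q : ℝ) ^ φ (u + 1) < (q : ℝ) ^ φ (v + 1) := hpow (by omega)
  have hxuv : (q : ℝ) ^ φ (g u) < (q : ℝ) ^ φ (g v) := by
    linarith [mul_lt_mul_of_pos_left hyuv hlam']
  refine ⟨g v, g u, v + 1, u + 1, hpow.lt_iff_lt.1 hxu, hpow.lt_iff_lt.1 hxuv, by omega,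
    by omega, ?_⟩
  rw [eq_div_iff (sub_ne_zero.2 hyuv.ne')]
  linarith

/-- Corollary 5.1: for an integer `q ≥ 2`, an increasing `φ : ℕ → ℕ` with `φ(n) ≥ n`,
and `X_φ = {q^{φ(n)} : n ≥ 1} ⊆ ℝ`, if a positive rational `λ` keeps `X_φ` in its
cloud (i.e., some correspondence `R` between `X_φ` and `X_φ` has
`sup { |d(x,x') − λ·d(y,y')| } < ∞`), then for every `M` there are `n > k > M` and
`m > l > M` with `λ = (q^{φ(n)} − q^{φ(k)}) / (q^{φ(m)} − q^{φ(l)})`. -/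
theorem rational_stabilizer_form (q : ℕ) (hq : 2 ≤ q)
    (φ : ℕ → ℕ) (hmono : StrictMono φ) (hge : ∀ n, n ≤ φ n)
    (Xs : Set ℝ) (hXs : Xs = {x : ℝ | ∃ n : ℕ, 1 ≤ n ∧ x = (q : ℝ) ^ φ n})
    (lam : ℚ) (hlam : 0 < lam)
    (hfin : ∃ R : Set (Xs × Xs), IsCorrespondence R ∧ disScaled (lam : ℝ) R < ⊤) :
    ∀ M : ℕ, ∃ n k m l : ℕ, M < k ∧ k < n ∧ M < l ∧ l < m ∧
      (lam : ℝ) =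
        ((q : ℝ) ^ φ n - (q : ℝ) ^ φ k) / ((q : ℝ) ^ φ m - (q : ℝ) ^ φ l) :=
  rational_stabilizer_form_general q hq φ hmono Xs hXs lam hlam hfin
end

section
/- Let q ≥ 2 be an integer, let X_q = { q^n : n ∈ ℤ } ⊆ ℝ with the metric induced from the real line, and let λ be a positive rational number. If there exists a correspondence R between X_q and X_q with sup { |d(x,x') − λ·d(y,y')| : (x,y), (x',y') ∈ R } < ∞ (i.e., λ·X_q lies at finite Gromov–Hausdorff distance from X_q), then there exist an integer α, a positive integer d, and coprime positive integers r₁ and r₂ such that λ = q^α · (q^{r₂·d} − 1) / (q^{r₁·d} − 1). -/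
open ENNReal

/-!
Fix the partner `x₀` of `1` and, for every `m ≥ 0`, a partner `q ^ kₘ` of `q ^ m` under the
correspondence. Bounded distortion gives `|q ^ kₘ - λ q ^ m| ≤ B` for a constant `B`, so
`q ^ (kₘ - m) → λ`. Taking logarithms, the integers `kₘ - m` converge to `log λ / log q`,
which is therefore an integer `α`; hence `λ = q ^ α`, the case `d = r₁ = r₂ = 1` of the
claimed form.
-/

open Filter Topology

lemma abs_dist_sub_mul_dist_le_toReal_disScaled {X Y : Type*} [MetricSpace X] [MetricSpace Y]
    {l : ℝ} {R : Set (X × Y)} (hR : disScaled l R ≠ ⊤) {p r : X × Y} (hp : p ∈ R)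
    (hr : r ∈ R) : |dist p.1 r.1 - l * dist p.2 r.2| ≤ (disScaled l R).toReal :=
  (ENNReal.ofReal_le_iff_le_toReal hR).mp <|
    (le_biSup (fun r : X × Y => ENNReal.ofReal |dist p.1 r.1 - l * dist p.2 r.2|) hr).trans
      (le_biSup (fun p : X × Y => ⨆ r ∈ R, ENNReal.ofReal |dist p.1 r.1 - l * dist p.2 r.2|) hp)

lemma exists_zpow_sub_mul_pow_le {q : ℝ} (hq : 1 ≤ q) {Xs : Set ℝ}
    (hXs : Xs = {x : ℝ | ∃ n : ℤ, x = q ^ n}) {l : ℝ} {R : Set (Xs × Xs)}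
    (hR : ∀ y, ∃ x, (x, y) ∈ R) (hfin : disScaled l R ≠ ⊤) :
    ∃ (k : ℕ → ℤ) (B : ℝ), ∀ m : ℕ, |q ^ k m - l * q ^ m| ≤ B := by
  have hmem : ∀ n : ℤ, q ^ n ∈ Xs := fun n => hXs ▸ ⟨n, rfl⟩
  obtain ⟨x₀, hx₀⟩ := hR ⟨q ^ (0 : ℤ), hmem 0⟩
  choose x hx using fun m : ℕ => hR ⟨q ^ (m : ℤ), hmem m⟩
  choose k hk using fun m => (hXs ▸ (x m).2 : ∃ n : ℤ, (x m : ℝ) = q ^ n)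
  refine ⟨k, (disScaled l R).toReal + |(x₀ : ℝ)| + |l|, fun m => ?_⟩
  have hqm : |q ^ m - 1| = q ^ m - 1 := abs_of_nonneg (sub_nonneg.mpr (one_le_pow₀ hq))
  have hdist := abs_dist_sub_mul_dist_le_toReal_disScaled hfin (hx m) hx₀
  simp only [Subtype.dist_eq, Real.dist_eq, zpow_zero, zpow_natCast, hk, hqm] at hdist
  have hx₀_near : |(|q ^ k m - x₀| - q ^ k m)| ≤ |(x₀ : ℝ)| := by
    simpa [abs_of_pos (zpow_pos (by linarith) (k m) : 0 < q ^ k m)] using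
      abs_abs_sub_abs_le_abs_sub (q ^ k m - x₀) (q ^ k m)
  rw [abs_le] at hdist hx₀_near ⊢
  constructor <;>
    linarith [hdist.1, hdist.2, hx₀_near.1, hx₀_near.2, neg_abs_le l, le_abs_self l]

lemma tendsto_zpow_sub_of_abs_zpow_sub_mul_pow_le {q l B : ℝ} (hq : 1 < q) {k : ℕ → ℤ}
    (hB : ∀ m : ℕ, |q ^ k m - l * q ^ m| ≤ B) :
    Tendsto (fun m : ℕ => q ^ (k m - m)) atTop (𝓝 l) := by
  have hq₀ : 0 < q := by linarith
  have hrescale : ∀ m : ℕ, q ^ (k m - m) - l = (q ^ k m - l * q ^ m) / q ^ m := fun m => by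
    rw [zpow_sub₀ hq₀.ne', zpow_natCast]
    field_simp
  rw [tendsto_iff_norm_sub_tendsto_zero]
  refine squeeze_zero (fun _ => norm_nonneg _) (fun m => ?_)
    ((tendsto_const_nhds (x := B)).div_atTop (tendsto_pow_atTop_atTop_of_one_lt hq))
  rw [Real.norm_eq_abs, hrescale, abs_div, abs_of_pos (pow_pos hq₀ m)]
  exact div_le_div_of_nonneg_right (hB m) (pow_pos hq₀ m).le

lemma exists_zpow_eq_of_tendsto_zpow {ι : Type*} {F : Filter ι} [F.NeBot] {q l : ℝ}
    (hq : 1 < q) (hl : 0 < l) {a : ι → ℤ} (h : Tendsto (fun i => q ^ a i) F (𝓝 l)) :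
    ∃ α : ℤ, l = q ^ α := by
  have hlogq : Real.log q ≠ 0 := (Real.log_pos hq).ne'
  have hlog : Tendsto (fun i => (a i : ℝ)) F (𝓝 (Real.log l / Real.log q)) := by
    have := ((Real.continuousAt_log hl.ne').tendsto.comp h).div_const (Real.log q)
    simpa only [Function.comp_def, Real.log_zpow, mul_div_assoc, div_self hlogq,
      mul_one] using this
  obtain ⟨α, hα⟩ := Real.isClosed_range_intCast.mem_of_tendsto hlog
    (Eventually.of_forall fun i => Set.mem_range_self (a i))
  refine ⟨α, ?_⟩
  rw [← Real.exp_log hl, ← Real.exp_log (zpow_pos (by linarith) α), Real.log_zpow, hα,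
    div_mul_cancel₀ _ hlogq]

/-- Proposition 5.6: for an integer `q ≥ 2`, `X_q = {q^n : n ∈ ℤ} ⊆ ℝ`, and a
positive rational `λ`, if some correspondence `R` between `X_q` and `X_q` has
`sup { |d(x,x') − λ·d(y,y')| } < ∞` (i.e., `λX_q` stays in the cloud of `X_q`),
then `λ = q^α (q^{r₂d} − 1)/(q^{r₁d} − 1)` for some integer `α`, positive integer
`d` and coprime positive integers `r₁`, `r₂`. -/
theorem rational_stabilizer_of_geometric (q : ℕ) (hq : 2 ≤ q)
    (Xs : Set ℝ) (hXs : Xs = {x : ℝ | ∃ n : ℤ, x = (q : ℝ) ^ n})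
    (lam : ℚ) (hlam : 0 < lam)
    (hfin : ∃ R : Set (Xs × Xs), IsCorrespondence R ∧ disScaled (lam : ℝ) R < ⊤) :
    ∃ (α : ℤ) (d r₁ r₂ : ℕ), 0 < d ∧ 0 < r₁ ∧ 0 < r₂ ∧ Nat.Coprime r₁ r₂ ∧
      (lam : ℝ) =
        (q : ℝ) ^ α * ((q : ℝ) ^ (r₂ * d) - 1) / ((q : ℝ) ^ (r₁ * d) - 1) := by
  obtain ⟨R, ⟨-, hR⟩, hdis⟩ := hfin
  have hq₁ : (1 : ℝ) < q := by exact_mod_cast hq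
  obtain ⟨k, B, hB⟩ := exists_zpow_sub_mul_pow_le hq₁.le hXs hR hdis.ne
  obtain ⟨α, hα⟩ := exists_zpow_eq_of_tendsto_zpow hq₁ (by exact_mod_cast hlam)
    (tendsto_zpow_sub_of_abs_zpow_sub_mul_pow_le hq₁ hB)
  refine ⟨α, 1, 1, 1, one_pos, one_pos, one_pos, Nat.coprime_one_left 1, ?_⟩
  rw [hα, mul_one, pow_one, mul_div_assoc, div_self (sub_ne_zero.mpr hq₁.ne'), mul_one]
end

section
/- Let q ≥ 2 be an integer, let X_q = { q^n : n ∈ ℤ } ⊆ ℝ with the metric induced from the real line, and let λ be a positive rational number. Then there exists a correspondence R between X_q and X_q with sup { |d(x,x') − λ·d(y,y')| : (x,y), (x',y') ∈ R } < ∞ (i.e., λ·X_q lies at finite Gromov–Hausdorff distance from X_q) if and only if λ = q^α for some integer α. -/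
/-!
A correspondence of finite `λ`-distortion pairs each `q ^ n` with some `q ^ k n` so that,
measured from a fixed base pair, `|q ^ n - λ q ^ k n|` stays bounded. Dividing by `q ^ n`
gives `q ^ (k n - n) → λ⁻¹`; taking logarithms, the integers `k n - n` converge in `ℝ`,
so their limit `log λ⁻¹ / log q` is an integer. Conversely, for `λ = q ^ α` the graph of
multiplication by `λ` is a correspondence of `X_q` with itself of distortion zero.
-/

open ENNReal

open Filter Topology Pointwise

section Distortion

variable {X Y : Type*} [MetricSpace X] [MetricSpace Y] {l : ℝ} {R : Set (X × Y)}

theorem exists_bound_of_disScaled_lt_top (h : disScaled l R < ⊤) :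
    ∃ C : ℝ, ∀ p ∈ R, ∀ r ∈ R, |dist p.1 r.1 - l * dist p.2 r.2| ≤ C := by
  refine ⟨(disScaled l R).toReal, fun p hp r hr => ?_⟩
  have hle : ENNReal.ofReal |dist p.1 r.1 - l * dist p.2 r.2| ≤ disScaled l R :=
    le_iSup₂_of_le p hp (le_iSup₂_of_le r hr le_rfl)
  simpa using ENNReal.toReal_mono h.ne hle

theorem disScaled_eq_zero_of_forall
    (h : ∀ p ∈ R, ∀ r ∈ R, dist p.1 r.1 = l * dist p.2 r.2) :
    disScaled l R = 0 := by
  refine le_antisymm (iSup₂_le fun p hp => iSup₂_le fun r hr => ?_) bot_le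
  simp [h p hp r hr]

end Distortion

theorem exists_correspondence_disScaled_eq_zero {S : Set ℝ} {c : ℝ} (hc : 0 ≤ c)
    (hS : c • S = S) :
    ∃ R : Set (S × S), IsCorrespondence R ∧ disScaled c R = 0 := by
  refine ⟨{p | (p.1 : ℝ) = c * p.2}, ⟨fun x => ?_, fun y => ?_⟩, ?_⟩
  · obtain ⟨y, hy, hyx⟩ := Set.mem_smul_set.1 (hS.symm.subset x.2)
    exact ⟨⟨y, hy⟩, hyx.symm⟩
  · exact ⟨⟨c * y, hS.subset (Set.smul_mem_smul_set y.2)⟩, rfl⟩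
  · refine disScaled_eq_zero_of_forall fun p hp r hr => ?_
    simp only [Set.mem_ofPred_eq] at hp hr
    rw [Subtype.dist_eq, Subtype.dist_eq, Real.dist_eq, Real.dist_eq, hp, hr, ← mul_sub,
      abs_mul, abs_of_nonneg hc]

/-- Nonnegativity lets distances to a base pair `(s, y₀) ∈ R` stand in for the points
themselves, up to the constant `s + l * y₀`. -/
theorem exists_abs_sub_mul_le_of_disScaled_lt_top {S : Set ℝ} (hS : ∀ x ∈ S, 0 ≤ x)
    {l : ℝ} (hl : 0 ≤ l) {R : Set (S × S)} (hR : ∀ x, ∃ y, (x, y) ∈ R)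
    (h : disScaled l R < ⊤) :
    ∃ C : ℝ, ∀ x : S, ∃ y : S, |(x : ℝ) - l * y| ≤ C := by
  rcases S.eq_empty_or_nonempty with rfl | ⟨s, hs⟩
  · exact ⟨0, fun x => x.2.elim⟩
  obtain ⟨C, hC⟩ := exists_bound_of_disScaled_lt_top h
  obtain ⟨y₀, hy₀⟩ := hR ⟨s, hs⟩
  refine ⟨C + s + l * y₀, fun x => ?_⟩
  obtain ⟨y, hy⟩ := hR x
  have hxy := abs_le.1 (hC _ hy _ hy₀)
  simp only [Subtype.dist_eq, Real.dist_eq] at hxy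
  have hxs : |(x : ℝ) - s| ≤ x + s :=
    abs_le.2 ⟨by linarith [hS x x.2], by linarith [hS s hs]⟩
  have hyy : |(y : ℝ) - y₀| ≤ y + y₀ :=
    abs_le.2 ⟨by linarith [hS y y.2], by linarith [hS y₀ y₀.2]⟩
  refine ⟨y, abs_le.2 ⟨?_, ?_⟩⟩ <;> nlinarith [le_abs_self ((x : ℝ) - s),
    mul_le_mul_of_nonneg_left hyy hl, mul_le_mul_of_nonneg_left (le_abs_self ((y : ℝ) - y₀)) hl]

theorem zpow_smul_setOf_zpow {a : ℝ} (ha : a ≠ 0) (α : ℤ) :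
    a ^ α • {x : ℝ | ∃ n : ℤ, x = a ^ n} = {x : ℝ | ∃ n : ℤ, x = a ^ n} := by
  ext x
  simp only [Set.mem_smul_set, Set.mem_ofPred_eq, smul_eq_mul]
  constructor
  · rintro ⟨_, ⟨n, rfl⟩, rfl⟩
    exact ⟨α + n, by rw [zpow_add₀ ha]⟩
  · rintro ⟨n, rfl⟩
    exact ⟨a ^ (n - α), ⟨n - α, rfl⟩, by rw [← zpow_add₀ ha, add_sub_cancel]⟩

theorem tendsto_zpow_sub_of_abs_sub_le {a l C : ℝ} (ha : 1 < a) (hl : 0 < l) {k : ℕ → ℤ}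
    (hk : ∀ n : ℕ, |a ^ n - l * a ^ k n| ≤ C) :
    Tendsto (fun n : ℕ => a ^ (k n - n)) atTop (𝓝 l⁻¹) := by
  have ha0 : 0 < a := by positivity
  have hlim : Tendsto (fun n : ℕ => C * l⁻¹ * a⁻¹ ^ n) atTop (𝓝 0) := by
    simpa using (tendsto_pow_atTop_nhds_zero_of_lt_one (by positivity)
      (inv_lt_one_of_one_lt₀ ha)).const_mul (C * l⁻¹)
  refine tendsto_iff_dist_tendsto_zero.2
    (squeeze_zero (fun _ => dist_nonneg) (fun n => ?_) hlim)
  have hid : a ^ (k n - n) - l⁻¹ = (l * a ^ k n - a ^ n) * (l⁻¹ * a⁻¹ ^ n) := by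
    rw [zpow_sub₀ ha0.ne', zpow_natCast, inv_pow]
    field_simp
  rw [Real.dist_eq, hid, abs_mul, abs_of_pos (by positivity : 0 < l⁻¹ * a⁻¹ ^ n),
    abs_sub_comm, mul_assoc]
  exact mul_le_mul_of_nonneg_right (hk n) (by positivity)

theorem exists_zpow_eq_of_tendsto {ι : Type*} {f : Filter ι} [f.NeBot] {a c : ℝ} (ha : 1 < a)
    (hc : 0 < c) {j : ι → ℤ} (h : Tendsto (fun i => a ^ j i) f (𝓝 c)) :
    ∃ m : ℤ, c = a ^ m := by
  have hloga : 0 < Real.log a := Real.log_pos ha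
  have hlog : Tendsto (fun i => (j i : ℝ)) f (𝓝 (Real.log c / Real.log a)) := by
    have := ((Real.continuousAt_log hc.ne').tendsto.comp h).div_const (Real.log a)
    simpa [Function.comp_def, Real.log_zpow, hloga.ne'] using this
  obtain ⟨m, hm⟩ := Int.isClosedEmbedding_coe_real.isClosed_range.mem_of_tendsto hlog
    (Eventually.of_forall fun i => Set.mem_range_self (j i))
  refine ⟨m, Real.log_injOn_pos hc (zpow_pos (by linarith : 0 < a) m) ?_⟩
  rw [Real.log_zpow, hm]
  field_simp

/-- Theorem 5.2: for an integer `q ≥ 2`, `X_q = {q^n : n ∈ ℤ} ⊆ ℝ`, and a positive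
rational `λ`, the similarity `H_λ` keeps `X_q` in its cloud (i.e., some
correspondence `R` between `X_q` and `X_q` has
`sup { |d(x,x') − λ·d(y,y')| } < ∞`) iff `λ = q^α` for some integer `α`. -/
theorem rational_stabilizer_eq_powers (q : ℕ) (hq : 2 ≤ q)
    (Xs : Set ℝ) (hXs : Xs = {x : ℝ | ∃ n : ℤ, x = (q : ℝ) ^ n})
    (lam : ℚ) (hlam : 0 < lam) :
    (∃ R : Set (Xs × Xs), IsCorrespondence R ∧ disScaled (lam : ℝ) R < ⊤) ↔
      ∃ α : ℤ, (lam : ℝ) = (q : ℝ) ^ α := by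
  subst hXs
  have hq1 : (1 : ℝ) < q := by exact_mod_cast hq
  have hl : (0 : ℝ) < lam := by exact_mod_cast hlam
  constructor
  · rintro ⟨R, hR, hdis⟩
    obtain ⟨C, hC⟩ := exists_abs_sub_mul_le_of_disScaled_lt_top
      (by rintro _ ⟨n, rfl⟩; positivity) hl.le hR.1 hdis
    have hk : ∀ n : ℕ, ∃ k : ℤ, |(q : ℝ) ^ n - lam * (q : ℝ) ^ k| ≤ C := by
      intro n
      obtain ⟨⟨_, k, rfl⟩, hk⟩ := hC ⟨(q : ℝ) ^ n, n, (zpow_natCast _ _).symm⟩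
      exact ⟨k, hk⟩
    choose k hk using hk
    obtain ⟨m, hm⟩ := exists_zpow_eq_of_tendsto hq1 (inv_pos.2 hl)
      (tendsto_zpow_sub_of_abs_sub_le hq1 hl hk)
    exact ⟨-m, by rw [zpow_neg, ← hm, inv_inv]⟩
  · rintro ⟨α, hα⟩
    obtain ⟨R, hR, h0⟩ := exists_correspondence_disScaled_eq_zero hl.le
      (hα ▸ zpow_smul_setOf_zpow (by positivity) α)
    exact ⟨R, hR, h0 ▸ ENNReal.zero_lt_top⟩
end
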